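/- Fix reals T_− < T_+ and set m(x) = T_− + x(T_+ − T_−) for x ∈ [0,1], m^N_k = m(k/N), and C̃^N_{k,ℓ} = ((T_+−T_−)²/(N+1))(k/N)(1 − ℓ/N) for 0 ≤ k < ℓ ≤ N, C̃^N_{k,k} = ((T_+−T_−)²/(N+1))(k/N)(1 − k/N) + (T_+−T_−)²/(2N(N+1)), extended symmetrically by C̃^N_{ℓ,k} = C̃^N_{k,ℓ}. For each N ≥ 2 let ν_N be a probability measure on [T_−,T_+]^{N+1} (coordinates O_0,…,O_N) with E_{ν_N}(O_k) = m^N_k for all k and Cov_{ν_N}(O_k, O_ℓ) ≤ C̃^N_{k,ℓ} for all k, ℓ. Then for every continuous ψ : [0,1] → ℝ and every ε > 0, lim_{N→∞} ν_N( | (1/N) Σ_{k=0}^{N} ψ(k/N) O_k − ∫₀¹ ψ(x) m(x) dx | > ε ) = 0. -/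

import Mathlib

/-! The mean of `⟨π_N(O), ψ⟩` is the Riemann sum `(1/N) ∑ₖ ψ(k/N) m(k/N)`, which tends to
`∫₀¹ ψ m`. By Cauchy–Schwarz its variance is at most `(N+1) ∑ₖ (ψ(k/N)/N)² Var(Oₖ)`, and the
diagonal bound `Var(Oₖ) ≤ C̃^N_{k,k} ≤ (T₊ - T₋)²/(2N)` makes this `O(1/N)`; Chebyshev's inequality
then gives the concentration. -/

open MeasureTheory

/-- The covariance bound `C̃^N_{k,ℓ}` (extended symmetrically). -/
noncomputable def Ctil (N : ℕ) (Tm Tp : ℝ) (k l : ℕ) : ℝ :=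
  if k = l then
    (Tp - Tm) ^ 2 / (N + 1) * ((k : ℝ) / N) * (1 - (k : ℝ) / N)
      + (Tp - Tm) ^ 2 / (2 * N * (N + 1))
  else
    (Tp - Tm) ^ 2 / (N + 1) * (((min k l : ℕ) : ℝ) / N) * (1 - ((max k l : ℕ) : ℝ) / N)

open ProbabilityTheory Filter Topology Finset

namespace ProbabilityTheory

section

variable {Ω : Type*} {mΩ : MeasurableSpace Ω} {μ : Measure Ω} [IsFiniteMeasure μ]

lemma two_mul_covariance_le_variance_add_variance {X Y : Ω → ℝ} (hX : MemLp X 2 μ)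
    (hY : MemLp Y 2 μ) : 2 * cov[X, Y; μ] ≤ Var[X; μ] + Var[Y; μ] := by
  have := variance_nonneg (X - Y) μ
  rw [variance_sub hX hY] at this
  linarith

lemma variance_fun_sum_le_card_mul_sum_variance {ι : Type*} {X : ι → Ω → ℝ} (s : Finset ι)
    (hX : ∀ i ∈ s, MemLp (X i) 2 μ) :
    Var[fun ω ↦ ∑ i ∈ s, X i ω; μ] ≤ #s * ∑ i ∈ s, Var[X i; μ] := by
  rw [variance_fun_sum' hX]
  calc ∑ i ∈ s, ∑ j ∈ s, cov[X i, X j; μ]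
      ≤ ∑ i ∈ s, ∑ j ∈ s, (Var[X i; μ] + Var[X j; μ]) / 2 := by
        gcongr with i hi j hj
        linarith [two_mul_covariance_le_variance_add_variance (hX i hi) (hX j hj)]
    _ = #s * ∑ i ∈ s, Var[X i; μ] := by
        simp only [add_div, sum_add_distrib, ← sum_div, sum_const, nsmul_eq_mul, ← mul_sum]
        ring

end

lemma tendsto_measure_lt_abs_sub_of_tendsto_variance {Ω : ℕ → Type*}
    [∀ n, MeasurableSpace (Ω n)] {μ : ∀ n, Measure (Ω n)} [∀ n, IsFiniteMeasure (μ n)]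
    {Y : ∀ n, Ω n → ℝ} {a ε : ℝ} (hY : ∀ᶠ n in atTop, MemLp (Y n) 2 (μ n))
    (hmean : Tendsto (fun n ↦ ∫ ω, Y n ω ∂μ n) atTop (𝓝 a))
    (hvar : Tendsto (fun n ↦ Var[Y n; μ n]) atTop (𝓝 0)) (hε : 0 < ε) :
    Tendsto (fun n ↦ μ n {ω | ε < |Y n ω - a|}) atTop (𝓝 0) := by
  have hbound : Tendsto (fun n ↦ ENNReal.ofReal (Var[Y n; μ n] / (ε / 2) ^ 2)) atTop (𝓝 0) := by
    simpa using ENNReal.tendsto_ofReal (hvar.div_const ((ε / 2) ^ 2))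
  refine tendsto_of_tendsto_of_tendsto_of_le_of_le' tendsto_const_nhds hbound
    (Eventually.of_forall fun _ ↦ zero_le) ?_
  filter_upwards [hY, Metric.tendsto_nhds.mp hmean (ε / 2) (half_pos hε)] with n hYn hclose
  refine (measure_mono fun ω hω ↦ ?_).trans (meas_ge_le_variance_div_sq hYn (half_pos hε))
  rw [Real.dist_eq] at hclose
  simp only [Set.mem_ofPred_eq] at hω ⊢
  linarith [abs_sub_le (Y n ω) (∫ ω, Y n ω ∂μ n) a]

end ProbabilityTheory

lemma abs_intervalIntegral_sub_mul_le {g : ℝ → ℝ} {a b c δ : ℝ} (hab : a ≤ b)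
    (hg : IntervalIntegrable g volume a b) (hδ : ∀ x ∈ Set.Icc a b, |g x - c| ≤ δ) :
    |(∫ x in a..b, g x) - (b - a) * c| ≤ δ * (b - a) := by
  have hsub : (∫ x in a..b, g x) - (b - a) * c = ∫ x in a..b, (g x - c) := by
    rw [intervalIntegral.integral_sub hg intervalIntegrable_const,
      intervalIntegral.integral_const, smul_eq_mul]
  rw [hsub, ← abs_of_nonneg (sub_nonneg.mpr hab), ← Real.norm_eq_abs]
  refine intervalIntegral.norm_integral_le_of_norm_le_const fun x hx ↦ ?_
  rw [Set.uIoc_of_le hab] at hx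
  exact hδ x (Set.Ioc_subset_Icc_self hx)

lemma Icc_natCast_div_subset_Icc_zero_one {k N : ℕ} (hk : k < N) :
    Set.Icc ((k : ℝ) / N) (((k + 1 : ℕ) : ℝ) / N) ⊆ Set.Icc 0 1 := by
  have hN : (0 : ℝ) < N := by exact_mod_cast (Nat.zero_le k).trans_lt hk
  refine Set.Icc_subset_Icc (by positivity) ((div_le_one hN).mpr ?_)
  exact_mod_cast hk

theorem tendsto_riemannSum_intervalIntegral {g : ℝ → ℝ} (hg : ContinuousOn g (Set.Icc 0 1)) :
    Tendsto (fun N : ℕ ↦ 1 / (N : ℝ) * ∑ k ∈ range N, g (k / N)) atTop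
      (𝓝 (∫ x in (0 : ℝ)..1, g x)) := by
  rw [Metric.tendsto_atTop]
  intro δ hδ
  obtain ⟨η, hη, hgη⟩ := Metric.uniformContinuousOn_iff_le.mp
    (isCompact_Icc.uniformContinuousOn_of_continuous hg) (δ / 2) (half_pos hδ)
  obtain ⟨N₀, hN₀⟩ := exists_nat_one_div_lt hη
  refine ⟨N₀ + 1, fun N hN ↦ ?_⟩
  have hNpos : (0 : ℝ) < N := by exact_mod_cast Nat.succ_pos N₀ |>.trans_le hN
  have hmesh : 1 / (N : ℝ) ≤ η := by
    refine le_trans ?_ hN₀.le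
    gcongr
    exact_mod_cast hN
  have hwidth (k : ℕ) : ((k + 1 : ℕ) : ℝ) / N - k / N = 1 / N := by push_cast; ring
  have hint (k : ℕ) (hk : k < N) :
      IntervalIntegrable g volume ((k : ℝ) / N) (((k + 1 : ℕ) : ℝ) / N) := by
    refine (hg.mono ?_).intervalIntegrable
    rw [Set.uIcc_of_le (by gcongr; omega)]
    exact Icc_natCast_div_subset_Icc_zero_one hk
  have hsplit : ∫ x in (0 : ℝ)..1, g x
      = ∑ k ∈ range N, ∫ x in ((k : ℝ) / N)..(((k + 1 : ℕ) : ℝ) / N), g x := by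
    rw [intervalIntegral.sum_integral_adjacent_intervals (a := fun k : ℕ ↦ (k : ℝ) / N) hint]
    simp [hNpos.ne']
  have hcell (k : ℕ) (hk : k ∈ range N) :
      |(∫ x in ((k : ℝ) / N)..(((k + 1 : ℕ) : ℝ) / N), g x) - 1 / N * g (k / N)|
        ≤ δ / 2 * (1 / N) := by
    have hk := mem_range.mp hk
    have hsub := Icc_natCast_div_subset_Icc_zero_one hk
    rw [← hwidth k]
    refine abs_intervalIntegral_sub_mul_le (by gcongr; omega) (hint k hk) fun x hx ↦ ?_
    rw [← Real.dist_eq, dist_comm]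
    refine hgη _ (hsub ⟨le_rfl, by gcongr; omega⟩) _ (hsub hx) ?_
    rw [Real.dist_eq, abs_of_nonpos (by linarith [hx.1])]
    linarith [hx.2, hwidth k]
  rw [dist_comm, Real.dist_eq, hsplit, mul_sum, ← sum_sub_distrib]
  calc _ ≤ ∑ k ∈ range N, δ / 2 * (1 / N) := (abs_sum_le_sum_abs _ _).trans (sum_le_sum hcell)
    _ = δ / 2 := by rw [sum_const, card_range, nsmul_eq_mul]; field_simp
    _ < δ := half_lt_self hδ

theorem tendsto_riemannSum_fin_succ {g : ℝ → ℝ} (hg : ContinuousOn g (Set.Icc 0 1)) :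
    Tendsto (fun N : ℕ ↦ 1 / (N : ℝ) * ∑ k : Fin (N + 1), g ((k : ℕ) / N)) atTop
      (𝓝 (∫ x in (0 : ℝ)..1, g x)) := by
  have hlast : Tendsto (fun N : ℕ ↦ 1 / (N : ℝ) * g 1) atTop (𝓝 0) := by
    simpa using tendsto_one_div_atTop_nhds_zero_nat.mul_const (g 1)
  refine (add_zero (∫ x in (0 : ℝ)..1, g x) ▸
    (tendsto_riemannSum_intervalIntegral hg).add hlast).congr' ?_
  filter_upwards [eventually_ne_atTop 0] with N hN
  rw [Fin.sum_univ_eq_sum_range (fun k ↦ g (k / N)), sum_range_succ,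
    div_self (Nat.cast_ne_zero.mpr hN), mul_add]

section Coordinates

variable {ι : Type*} {μ : Measure (ι → ℝ)}

lemma memLp_eval_of_ae_mem_Icc [IsFiniteMeasure μ] {a b : ℝ}
    (hsupp : ∀ᵐ O ∂μ, ∀ k, O k ∈ Set.Icc a b) (k : ι) : MemLp (fun O ↦ O k) 2 μ := by
  refine MemLp.of_bound (measurable_pi_apply k).aestronglyMeasurable (max |a| |b|) ?_
  filter_upwards [hsupp] with O hO
  exact abs_le_max_abs_abs (hO k).1 (hO k).2

lemma variance_eval_le [IsProbabilityMeasure μ] {a b C : ℝ}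
    (hsupp : ∀ᵐ O ∂μ, ∀ k, O k ∈ Set.Icc a b) {k : ι}
    (hcov : ∫ O, O k * O k ∂μ - (∫ O, O k ∂μ) * (∫ O, O k ∂μ) ≤ C) :
    Var[fun O ↦ O k; μ] ≤ C := by
  have hk := memLp_eval_of_ae_mem_Icc hsupp k
  rw [← covariance_self hk.aemeasurable, covariance_eq_sub hk hk]
  exact hcov

end Coordinates

/-- `⟨π_N(O), ψ⟩`: the empirical measure `π_N(O)` integrated against `ψ`. -/
noncomputable def empiricalPairing (N : ℕ) (ψ : ℝ → ℝ) (O : Fin (N + 1) → ℝ) : ℝ :=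
  1 / (N : ℝ) * ∑ k : Fin (N + 1), ψ ((k : ℕ) / N) * O k

section EmpiricalPairing

variable {N : ℕ} {μ : Measure (Fin (N + 1) → ℝ)} [IsFiniteMeasure μ] {a b : ℝ}

lemma memLp_empiricalPairing (hsupp : ∀ᵐ O ∂μ, ∀ k, O k ∈ Set.Icc a b) (ψ : ℝ → ℝ) :
    MemLp (empiricalPairing N ψ) 2 μ :=
  (memLp_finsetSum _ fun k _ ↦ (memLp_eval_of_ae_mem_Icc hsupp k).const_mul _).const_mul _

lemma integral_empiricalPairing (hsupp : ∀ᵐ O ∂μ, ∀ k, O k ∈ Set.Icc a b) (ψ : ℝ → ℝ) :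
    ∫ O, empiricalPairing N ψ O ∂μ
      = 1 / (N : ℝ) * ∑ k : Fin (N + 1), ψ ((k : ℕ) / N) * ∫ O, O k ∂μ := by
  simp only [empiricalPairing]
  rw [integral_const_mul, integral_finsetSum _ fun k _ ↦
    ((memLp_eval_of_ae_mem_Icc hsupp k).integrable one_le_two).const_mul _]
  simp only [integral_const_mul]

lemma variance_empiricalPairing_le (hN : 0 < N) (hsupp : ∀ᵐ O ∂μ, ∀ k, O k ∈ Set.Icc a b)
    {ψ : ℝ → ℝ} {M σ : ℝ} (hψ : ∀ k : Fin (N + 1), |ψ ((k : ℕ) / N)| ≤ M)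
    (hvar : ∀ k : Fin (N + 1), Var[fun O ↦ O k; μ] ≤ σ) :
    Var[empiricalPairing N ψ; μ] ≤ 4 * M ^ 2 * σ := by
  have hterm (k : Fin (N + 1)) : Var[fun O ↦ ψ ((k : ℕ) / N) * O k; μ] ≤ M ^ 2 * σ := by
    rw [variance_const_mul, ← sq_abs]
    exact mul_le_mul (pow_le_pow_left₀ (abs_nonneg _) (hψ k) 2) (hvar k)
      (variance_nonneg _ _) (by positivity)
  calc Var[empiricalPairing N ψ; μ]
      = (1 / (N : ℝ)) ^ 2 * Var[fun O ↦ ∑ k : Fin (N + 1), ψ ((k : ℕ) / N) * O k; μ] :=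
        variance_const_mul _ _ _
    _ ≤ (1 / (N : ℝ)) ^ 2 * ((N + 1) * ∑ _k : Fin (N + 1), M ^ 2 * σ) := by
        gcongr
        refine (variance_fun_sum_le_card_mul_sum_variance _ fun k _ ↦
          (memLp_eval_of_ae_mem_Icc hsupp k).const_mul _).trans ?_
        rw [card_univ, Fintype.card_fin, Nat.cast_add_one]
        gcongr with k
        exact hterm k
    _ = ((N + 1) / N) ^ 2 * (M ^ 2 * σ) := by
        rw [sum_const, card_univ, Fintype.card_fin, nsmul_eq_mul]
        push_cast
        ring
    _ ≤ 2 ^ 2 * (M ^ 2 * σ) := by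
        have hσ : 0 ≤ σ := (variance_nonneg _ _).trans (hvar 0)
        gcongr
        rw [div_le_iff₀ (by exact_mod_cast hN)]
        linarith [show (1 : ℝ) ≤ N by exact_mod_cast hN]
    _ = 4 * M ^ 2 * σ := by ring

end EmpiricalPairing

lemma Ctil_self_le {N : ℕ} (hN : 0 < N) (Tm Tp : ℝ) (k : ℕ) :
    Ctil N Tm Tp k k ≤ (Tp - Tm) ^ 2 / (2 * N) := by
  have hquarter : (k : ℝ) / N * (1 - k / N) ≤ 1 / 4 := by
    nlinarith [sq_nonneg ((k : ℝ) / N - 1 / 2)]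
  rw [Ctil, if_pos rfl, mul_assoc]
  calc (Tp - Tm) ^ 2 / (N + 1) * ((k : ℝ) / N * (1 - k / N)) + (Tp - Tm) ^ 2 / (2 * N * (N + 1))
      ≤ (Tp - Tm) ^ 2 / (N + 1) * (1 / 4) + (Tp - Tm) ^ 2 / (2 * N * (N + 1)) := by gcongr
    _ ≤ (Tp - Tm) ^ 2 / (2 * N) := by
      rw [div_mul_eq_mul_div, div_add_div _ _ (by positivity) (by positivity),
        div_le_div_iff₀ (by positivity) (by positivity)]
      have : 0 ≤ (Tp - Tm) ^ 2 * N * N * (N + 1) := by positivity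
      nlinarith

theorem hydrostatic_limit_general
    (Tm Tp : ℝ)
    (ν : (N : ℕ) → Measure (Fin (N + 1) → ℝ))
    (hprob : ∀ N, IsProbabilityMeasure (ν N))
    (hsupp : ∀ N, 2 ≤ N → ∀ᵐ O ∂(ν N), ∀ k, O k ∈ Set.Icc Tm Tp)
    (hmean : ∀ N, 2 ≤ N → ∀ k : Fin (N + 1),
        ∫ O, O k ∂(ν N) = Tm + ((k : ℕ) : ℝ) / N * (Tp - Tm))
    (hcov : ∀ N, 2 ≤ N → ∀ k l : Fin (N + 1),
        ∫ O, O k * O l ∂(ν N) - (∫ O, O k ∂(ν N)) * (∫ O, O l ∂(ν N))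
          ≤ Ctil N Tm Tp (k : ℕ) (l : ℕ))
    (ψ : ℝ → ℝ) (hψ : ContinuousOn ψ (Set.Icc 0 1)) (ε : ℝ) (hε : 0 < ε) :
    Filter.Tendsto
      (fun N => ν N {O | ε <
          |(1 / (N : ℝ)) * ∑ k : Fin (N + 1), ψ (((k : ℕ) : ℝ) / N) * O k
            - ∫ x in (0:ℝ)..1, ψ x * (Tm + x * (Tp - Tm))|})
      Filter.atTop (nhds 0) := by
  have := hprob
  obtain ⟨M, hM⟩ := isCompact_Icc.exists_bound_of_continuousOn hψ
  have hψN (N : ℕ) (k : Fin (N + 1)) : |ψ ((k : ℕ) / N)| ≤ M := by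
    refine hM _ ⟨by positivity, div_le_one_of_le₀ ?_ (Nat.cast_nonneg N)⟩
    exact_mod_cast Fin.is_le k
  have hvar : ∀ᶠ N in atTop,
      Var[empiricalPairing N ψ; ν N] ≤ 4 * M ^ 2 * ((Tp - Tm) ^ 2 / (2 * N)) := by
    filter_upwards [eventually_ge_atTop 2] with N hN
    exact variance_empiricalPairing_le (by omega) (hsupp N hN) (hψN N) fun k ↦
      (variance_eval_le (hsupp N hN) (hcov N hN k k)).trans (Ctil_self_le (by omega) _ _ _)
  have hg : ContinuousOn (fun x ↦ ψ x * (Tm + x * (Tp - Tm))) (Set.Icc 0 1) :=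
    hψ.mul (by fun_prop)
  refine tendsto_measure_lt_abs_sub_of_tendsto_variance (Y := fun N ↦ empiricalPairing N ψ)
    ((eventually_ge_atTop 2).mono fun N hN ↦ memLp_empiricalPairing (hsupp N hN) ψ) ?_ ?_ hε
  · refine (tendsto_riemannSum_fin_succ hg).congr' ?_
    filter_upwards [eventually_ge_atTop 2] with N hN
    rw [integral_empiricalPairing (hsupp N hN)]
    simp only [hmean N hN]
  · refine tendsto_of_tendsto_of_tendsto_of_le_of_le' tendsto_const_nhds ?_
      (Eventually.of_forall fun N ↦ variance_nonneg _ _) hvar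
    have h := (tendsto_const_div_atTop_nhds_zero_nat ((Tp - Tm) ^ 2 / 2)).const_mul (4 * M ^ 2)
    rw [mul_zero] at h
    exact h.congr fun N ↦ by rw [div_div]

/-- one-dimensional hydrostatic limit. If `ν_N` are probability measures on
`[T₋,T₊]^{N+1}` whose means are the linear profile `m^N_k = T₋ + (k/N)(T₊−T₋)` and whose
covariances are bounded by `C̃^N`, then the empirical average of any continuous test
function concentrates on `∫₀¹ ψ(x) m(x) dx`. -/
theorem hydrostatic_limit
    (Tm Tp : ℝ) (hT : Tm < Tp)
    (ν : (N : ℕ) → Measure (Fin (N + 1) → ℝ))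
    (hprob : ∀ N, IsProbabilityMeasure (ν N))
    (hsupp : ∀ N, 2 ≤ N → ∀ᵐ O ∂(ν N), ∀ k, O k ∈ Set.Icc Tm Tp)
    (hmean : ∀ N, 2 ≤ N → ∀ k : Fin (N + 1),
        ∫ O, O k ∂(ν N) = Tm + ((k : ℕ) : ℝ) / N * (Tp - Tm))
    (hcov : ∀ N, 2 ≤ N → ∀ k l : Fin (N + 1),
        ∫ O, O k * O l ∂(ν N) - (∫ O, O k ∂(ν N)) * (∫ O, O l ∂(ν N))
          ≤ Ctil N Tm Tp (k : ℕ) (l : ℕ))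
    (ψ : ℝ → ℝ) (hψ : ContinuousOn ψ (Set.Icc 0 1)) (ε : ℝ) (hε : 0 < ε) :
    Filter.Tendsto
      (fun N => ν N {O | ε <
          |(1 / (N : ℝ)) * ∑ k : Fin (N + 1), ψ (((k : ℕ) : ℝ) / N) * O k
            - ∫ x in (0:ℝ)..1, ψ x * (Tm + x * (Tp - Tm))|})
      Filter.atTop (nhds 0) :=
  hydrostatic_limit_general Tm Tp ν hprob hsupp hmean hcov ψ hψ ε hε
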